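/- Under the assumptions that Q_i(t) = λ̂·θ_i·μ_{i1}·(1-β_{i,3}) with 0 ≤ θ_i ≤ 1, β_{i,3} < 0, λ̂ > 0, μ_{i1} ≥ 0, and R_i(t) > (1 - θ_i/n)·λ̂·μ_{i1}²·(1-β_{i,3}) > 0, one has (n·μ_{i1}·Q_i(t))/(μ_{i1}·Q_i(t) + n·R_i(t)) < n/(1 + n - θ_i) ≤ 1, and consequently n - Σ_{k=1}^n (n·μ_{k1}·Q_k(t))/(μ_{k1}·Q_k(t) + n·R_k(t)) > n - Σ_{k=1}^n n/(1 + n - θ_k) ≥ 0. -/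
import Mathlib


open Finset

/-- Bounds ensuring existence and uniqueness of the equilibrium reinsurance fixed point:
with `Q_i = λ̂·θ_i·μ_{i1}·(1-β_{i,3})` and `R_i > (1-θ_i/n)·λ̂·μ_{i1}²·(1-β_{i,3}) > 0`, one has
`(n·μ_{i1}·Q_i)/(μ_{i1}·Q_i + n·R_i) < n/(1+n-θ_i) ≤ 1`, and consequently
`n - Σ_k (n·μ_{k1}·Q_k)/(μ_{k1}·Q_k + n·R_k) > n - Σ_k n/(1+n-θ_k) ≥ 0`. -/
theorem reinsurance_denominator_bounds
    (n : ℕ) (hn : 1 ≤ n)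
    (θ β3 μ Q R : Fin n → ℝ)
    (hθ0 : ∀ i, 0 ≤ θ i) (hθ1 : ∀ i, θ i ≤ 1)
    (hβ3 : ∀ i, β3 i < 0)
    (lamhat : ℝ) (hlamhat : 0 < lamhat)
    (hμ : ∀ i, 0 ≤ μ i)
    (hQ : ∀ i, Q i = lamhat * θ i * μ i * (1 - β3 i))
    (hRlb : ∀ i, (1 - θ i / (n : ℝ)) * lamhat * (μ i) ^ 2 * (1 - β3 i) < R i)
    (hRlbpos : ∀ i, 0 < (1 - θ i / (n : ℝ)) * lamhat * (μ i) ^ 2 * (1 - β3 i)) :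
    (∀ i, (n : ℝ) * μ i * Q i / (μ i * Q i + n * R i) < (n : ℝ) / (1 + n - θ i)) ∧
    (∀ i, (n : ℝ) / (1 + n - θ i) ≤ 1) ∧
    ((n : ℝ) - ∑ k, (n : ℝ) / (1 + n - θ k) <
      (n : ℝ) - ∑ k, (n : ℝ) * μ k * Q k / (μ k * Q k + n * R k)) ∧
    (0 ≤ (n : ℝ) - ∑ k, (n : ℝ) / (1 + n - θ k)) := by
  have hn1 : (1 : ℝ) ≤ (n : ℝ) := by exact_mod_cast hn
  have hnpos : (0 : ℝ) < (n : ℝ) := lt_of_lt_of_le one_pos hn1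
  have hden : ∀ i, (0 : ℝ) < 1 + n - θ i := fun i => by
    have := hθ1 i; linarith
  -- key per-index inequality
  have key : ∀ i, (n : ℝ) * μ i * Q i / (μ i * Q i + n * R i) < (n : ℝ) / (1 + n - θ i) := by
    intro i
    have hβ : (0 : ℝ) < 1 - β3 i := by have := hβ3 i; linarith
    have hμpos : 0 < μ i := by
      rcases lt_or_eq_of_le (hμ i) with h | h
      · exact h
      · exfalso; have := hRlbpos i; rw [← h] at this; simp at this
    set A : ℝ := lamhat * (μ i) ^ 2 * (1 - β3 i) with hA
    have hApos : 0 < A := by positivity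
    have hμQ : μ i * Q i = θ i * A := by rw [hQ i, hA]; ring
    have hRA : (1 - θ i / (n : ℝ)) * A < R i := by
      have := hRlb i
      calc (1 - θ i / (n : ℝ)) * A = (1 - θ i / (n : ℝ)) * lamhat * (μ i) ^ 2 * (1 - β3 i) := by
            rw [hA]; ring
        _ < R i := this
    have hD : (n : ℝ) * A < μ i * Q i + n * R i := by
      have h1 : (n : ℝ) * ((1 - θ i / (n : ℝ)) * A) < n * R i :=
        (mul_lt_mul_iff_right₀ hnpos).2 hRA
      have h2 : (n : ℝ) * ((1 - θ i / (n : ℝ)) * A) = (n - θ i) * A := by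
        field_simp
      have h3 : ((n : ℝ) - θ i) * A < n * R i := by rw [← h2]; exact h1
      rw [hμQ]; nlinarith [h3]
    have hDpos : 0 < μ i * Q i + n * R i := lt_trans (by positivity) hD
    rw [div_lt_div_iff₀ hDpos (hden i)]
    have hθn : θ i * (1 + n - θ i) ≤ (n : ℝ) := by
      nlinarith [mul_nonneg (sub_nonneg.2 (hθ1 i)) (sub_nonneg.2 (le_trans (hθ1 i) hn1))]
    have hμQ' : (n : ℝ) * μ i * Q i = n * (θ i * A) := by rw [hQ i, hA]; ring
    rw [hμQ', hμQ]
    nlinarith [mul_le_mul_of_nonneg_left hθn (le_of_lt (mul_pos hnpos hApos)),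
      (mul_lt_mul_iff_right₀ hnpos).2 hD]
  have le1 : ∀ i, (n : ℝ) / (1 + n - θ i) ≤ 1 := by
    intro i
    rw [div_le_one (hden i)]
    have := hθ1 i; linarith
  refine ⟨key, le1, ?_, ?_⟩
  · have : ∑ k, (n : ℝ) * μ k * Q k / (μ k * Q k + n * R k) < ∑ k, (n : ℝ) / (1 + n - θ k) := by
      apply Finset.sum_lt_sum_of_nonempty
      · exact Finset.univ_nonempty_iff.2 ⟨⟨0, hn⟩⟩
      · intro i _; exact key i
    linarith
  · have : ∑ k, (n : ℝ) / (1 + n - θ k) ≤ ∑ k : Fin n, (1 : ℝ) := by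
      apply Finset.sum_le_sum; intro i _; exact le1 i
    simp at this
    linarith
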